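/- In the Neyman–Scott model with reference prior π_R(θ₁,…,θ_n, σ²) ∝ (σ²)^{-1}, the marginal posterior of σ² is proportional to (σ²)^{-n(k−1)/2 − 1} exp[−n(k−1)S/(2σ²)], whose mean n(k−1)S/(n(k−1)−2) converges in probability to σ², i.e., the posterior mean is a consistent estimator of σ². -/

import Mathlib

open MeasureTheory ProbabilityTheory Filter Real
open scoped Topology

/-!
Since `∑ⱼ (xᵢⱼ - u)² = k (u - x̄ᵢ)² + ∑ⱼ (xᵢⱼ - x̄ᵢ)²`, integrating out the nuisance mean of a
row is a Gaussian integral in `u`, which leaves the factor `v^{-(k-1)/2} exp(-∑ⱼ(xᵢⱼ - x̄ᵢ)²/(2v))`;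
the product over the rows gives the shape of the marginal posterior of `v = σ²`.

The row statistic `Wᵢ = ∑ⱼ (Xᵢⱼ - X̄ᵢ)²` does not change when the row is shifted by `θᵢ`, so the
`Wᵢ` are i.i.d. functions of centred `N(0, σ²)` rows, with mean `(k - 1)σ²`. By the strong law
`(∑_{i<n} Wᵢ)/n → (k - 1)σ²` almost surely, and `n/(n(k - 1) - 2) → 1/(k - 1)`.
-/

section SumSqDev

variable {ι : Type*} [Fintype ι]

noncomputable def sumSqDev (x : ι → ℝ) : ℝ :=
  ∑ j, (x j - (∑ j', x j') / Fintype.card ι) ^ 2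

lemma measurable_sumSqDev : Measurable (sumSqDev : (ι → ℝ) → ℝ) := by
  unfold sumSqDev
  fun_prop

lemma sum_sub_sq (x : ι → ℝ) (c : ℝ) :
    ∑ j, (x j - c) ^ 2 = ∑ j, x j ^ 2 - 2 * c * ∑ j, x j + Fintype.card ι * c ^ 2 := by
  simp only [sub_sq, Finset.sum_add_distrib, Finset.sum_sub_distrib, Finset.sum_const,
    Finset.card_univ, nsmul_eq_mul, Finset.mul_sum, mul_right_comm _ (x _)]

lemma sumSqDev_eq (x : ι → ℝ) :
    sumSqDev x = ∑ j, x j ^ 2 - (∑ j, x j) ^ 2 / Fintype.card ι := by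
  rcases isEmpty_or_nonempty ι with _ | _
  · simp [sumSqDev]
  rw [sumSqDev, sum_sub_sq]
  field_simp
  ring

lemma sum_sub_sq_eq_card_mul_add_sumSqDev (x : ι → ℝ) (u : ℝ) :
    ∑ j, (x j - u) ^ 2
      = Fintype.card ι * (u - (∑ j, x j) / Fintype.card ι) ^ 2 + sumSqDev x := by
  rcases isEmpty_or_nonempty ι with _ | _
  · simp [sumSqDev]
  rw [sumSqDev_eq, sum_sub_sq]
  field_simp
  ring

lemma sumSqDev_sub_const (x : ι → ℝ) (c : ℝ) :
    sumSqDev (fun j => x j - c) = sumSqDev x := by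
  rcases isEmpty_or_nonempty ι with _ | _
  · simp [sumSqDev]
  simp only [sumSqDev_eq, sum_sub_sq, Finset.sum_sub_distrib, Finset.sum_const,
    Finset.card_univ, nsmul_eq_mul]
  field_simp
  ring

lemma integral_row_likelihood [Nonempty ι] {v : ℝ} (hv : 0 < v) (x : ι → ℝ) :
    ∫ u, ∏ j, (2 * π * v) ^ (-(1 / 2 : ℝ)) * exp (-(x j - u) ^ 2 / (2 * v))
      = (2 * π * v) ^ (-(((Fintype.card ι : ℝ) - 1) / 2)) * (Fintype.card ι : ℝ) ^ (-(1 / 2 : ℝ))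
        * exp (-sumSqDev x / (2 * v)) := by
  set k : ℝ := (Fintype.card ι : ℝ) with hk_def
  have hk : 0 < k := by positivity
  have hπv : 0 < 2 * π * v := by positivity
  set m := (∑ j, x j) / k
  have hprod : ∀ u, ∏ j, (2 * π * v) ^ (-(1 / 2 : ℝ)) * exp (-(x j - u) ^ 2 / (2 * v))
      = (2 * π * v) ^ (-(k / 2)) * exp (-sumSqDev x / (2 * v))
        * exp (-(k / (2 * v)) * (u - m) ^ 2) := by
    intro u
    rw [Finset.prod_mul_distrib, Finset.prod_const, Finset.card_univ, ← rpow_natCast,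
      ← rpow_mul hπv.le, ← exp_sum, ← Finset.sum_div, Finset.sum_neg_distrib,
      sum_sub_sq_eq_card_mul_add_sumSqDev, ← hk_def, mul_assoc _ (exp _), ← exp_add]
    congr 2 <;> ring
  simp_rw [hprod]
  rw [integral_const_mul, integral_sub_right_eq_self (fun w => exp (-(k / (2 * v)) * w ^ 2)),
    integral_gaussian, sqrt_eq_rpow, show π / (k / (2 * v)) = 2 * π * v / k by field_simp,
    div_rpow hπv.le hk.le, rpow_neg hk.le]
  have hpow : (2 * π * v) ^ (-(k / 2)) * (2 * π * v) ^ (1 / 2 : ℝ)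
      = (2 * π * v) ^ (-((k - 1) / 2)) := by
    rw [← rpow_add hπv]
    ring_nf
  rw [← hpow]
  ring

lemma integral_likelihood_mul_reference_prior {κ : Type*} [Fintype κ] [Nonempty ι] {v : ℝ}
    (hv : 0 < v) (x : κ → ι → ℝ) :
    (∫ t : κ → ℝ, ∏ i, ∏ j, (2 * π * v) ^ (-(1 / 2 : ℝ)) * exp (-(x i j - t i) ^ 2 / (2 * v)))
        * v ^ (-(1 : ℝ))
      = ((2 * π) ^ (-(((Fintype.card ι : ℝ) - 1) / 2)) * (Fintype.card ι : ℝ) ^ (-(1 / 2 : ℝ)))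
            ^ Fintype.card κ
          * v ^ (-((Fintype.card κ : ℝ) * ((Fintype.card ι : ℝ) - 1) / 2) - 1)
          * exp (-(∑ i, sumSqDev (x i)) / (2 * v)) := by
  set k : ℝ := (Fintype.card ι : ℝ)
  have hpow : (v ^ (-((k - 1) / 2))) ^ Fintype.card κ * v ^ (-(1 : ℝ))
      = v ^ (-((Fintype.card κ : ℝ) * (k - 1) / 2) - 1) := by
    rw [← rpow_natCast, ← rpow_mul hv.le, ← rpow_add hv]
    ring_nf
  rw [integral_fintype_prod_volume_eq_prod (fun i u => ∏ j, (2 * π * v) ^ (-(1 / 2 : ℝ))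
      * exp (-(x i j - u) ^ 2 / (2 * v))), ← hpow]
  simp only [integral_row_likelihood hv]
  simp only [mul_rpow (by positivity : (0 : ℝ) ≤ 2 * π) hv.le,
    Finset.prod_mul_distrib, Finset.prod_const, Finset.card_univ, ← exp_sum, ← Finset.sum_div,
    Finset.sum_neg_distrib]
  ring

end SumSqDev

section RowStatistics

variable {ι Ω : Type*} [Fintype ι] {mΩ : MeasurableSpace Ω} {P : Measure Ω}

lemma integrable_sumSqDev {Y : ι → Ω → ℝ} (hY : ∀ j, MemLp (Y j) 2 P) :
    Integrable (fun ω => sumSqDev (fun j => Y j ω)) P := by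
  have hsum : MemLp (fun ω => ∑ j, Y j ω) 2 P := memLp_finsetSum _ fun j _ => hY j
  simp only [sumSqDev_eq]
  exact (integrable_finsetSum _ fun j _ => (hY j).integrable_sq).sub
    (hsum.integrable_sq.div_const _)

lemma integral_sumSqDev [IsProbabilityMeasure P] [Nonempty ι] {Y : ι → Ω → ℝ} {m v : ℝ}
    (hY : ∀ j, MemLp (Y j) 2 P) (hindep : Pairwise fun i j => Y i ⟂ᵢ[P] Y j)
    (hmean : ∀ j, P[Y j] = m) (hvar : ∀ j, Var[Y j; P] = v) :
    ∫ ω, sumSqDev (fun j => Y j ω) ∂P = (Fintype.card ι - 1) * v := by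
  set k : ℝ := (Fintype.card ι : ℝ)
  have hsum : MemLp (fun ω => ∑ j, Y j ω) 2 P := memLp_finsetSum _ fun j _ => hY j
  have hsq : ∀ j, ∫ ω, Y j ω ^ 2 ∂P = v + m ^ 2 := fun j => by
    rw [← hvar j, ← hmean j, variance_eq_sub (hY j)]
    simp
  have hsum_sq : ∫ ω, (∑ j, Y j ω) ^ 2 ∂P = k * v + (k * m) ^ 2 := by
    have hvar_sum : Var[∑ j, Y j; P] = k * v := by
      rw [IndepFun.variance_sum (fun j _ => hY j) fun i _ j _ hij => hindep hij]
      simp [hvar, k]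
    have hmean_sum : ∫ ω, ∑ j, Y j ω ∂P = k * m := by
      rw [integral_finsetSum _ fun j _ => (hY j).integrable one_le_two]
      simp [hmean, k]
    rw [variance_eq_sub (memLp_finsetSum' _ fun j _ => hY j)] at hvar_sum
    simp only [Finset.sum_apply, Pi.pow_apply, hmean_sum] at hvar_sum
    linarith
  simp only [sumSqDev_eq]
  rw [integral_sub (integrable_finsetSum _ fun j _ => (hY j).integrable_sq)
      (hsum.integrable_sq.div_const _), integral_finsetSum _ fun j _ => (hY j).integrable_sq,
    integral_div, hsum_sq]
  simp only [hsq, Finset.sum_const, Finset.card_univ, nsmul_eq_mul]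
  field_simp
  ring

lemma ProbabilityTheory.iIndepFun.indepFun_row {κ β : Type*} [MeasurableSpace β]
    {Y : κ × ι → Ω → β} (h : iIndepFun Y P) (hY : ∀ p, AEMeasurable (Y p) P) {a b : κ}
    (hab : a ≠ b) :
    (fun ω j => Y (a, j) ω) ⟂ᵢ[P] (fun ω j => Y (b, j) ω) := by
  classical
  let row (c : κ) : Finset (κ × ι) := Finset.univ.map ⟨Prod.mk c, Prod.mk_right_injective c⟩
  have hrow (c : κ) (j : ι) : (c, j) ∈ row c := by simp [row]
  have hdisj : Disjoint (row a) (row b) := by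
    simp [row, Finset.disjoint_left, hab.symm]
  exact (h.indepFun_finset₀ _ _ hdisj hY).comp (φ := fun y j => y ⟨(a, j), hrow a j⟩)
    (ψ := fun y j => y ⟨(b, j), hrow b j⟩) (by fun_prop) (by fun_prop)

lemma ProbabilityTheory.iIndepFun.hasLaw_row {κ β : Type*} [MeasurableSpace β] {μ : Measure β}
    {Y : κ × ι → Ω → β} (h : iIndepFun Y P) (hlaw : ∀ p, HasLaw (Y p) μ P) (a : κ) :
    HasLaw (fun ω j => Y (a, j) ω) (Measure.pi fun _ => μ) P :=
  (h.precomp (Prod.mk_right_injective a)).hasLaw_pi fun j => hlaw (a, j)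

theorem ae_tendsto_sum_sumSqDev_div [Nonempty ι] {μ : Measure ℝ} (hμ : MemLp id 2 μ)
    {Y : ℕ × ι → Ω → ℝ} (h : iIndepFun Y P) (hlaw : ∀ p, HasLaw (Y p) μ P) :
    ∀ᵐ ω ∂P, Tendsto (fun n : ℕ => (∑ i ∈ Finset.range n, sumSqDev (fun j => Y (i, j) ω)) / n)
      atTop (𝓝 ((Fintype.card ι - 1) * Var[id; μ])) := by
  have := h.isProbabilityMeasure
  have hY (p) : MemLp (Y p) 2 P := by
    rw [← (hlaw p).map_eq] at hμ
    exact (memLp_map_measure_iff aestronglyMeasurable_id (hlaw p).aemeasurable).1 hμ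
  let W (i : ℕ) (ω : Ω) : ℝ := sumSqDev (fun j => Y (i, j) ω)
  have hW (i) : HasLaw (W i) ((Measure.pi fun _ => μ).map sumSqDev) P :=
    HasLaw.fun_comp (Y := sumSqDev) ⟨measurable_sumSqDev.aemeasurable, rfl⟩ (h.hasLaw_row hlaw i)
  have hident (i) : IdentDistrib (W i) (W 0) P P :=
    ⟨(hW i).aemeasurable, (hW 0).aemeasurable, (hW i).map_eq.trans (hW 0).map_eq.symm⟩
  have hindep : Pairwise fun i i' => W i ⟂ᵢ[P] W i' := fun i i' hii' =>
    (h.indepFun_row (fun p => (hlaw p).aemeasurable) hii').comp measurable_sumSqDev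
      measurable_sumSqDev
  have hmean : P[W 0] = (Fintype.card ι - 1) * Var[id; μ] :=
    integral_sumSqDev (fun j => hY (0, j))
      (fun j j' hjj' => (h.precomp (Prod.mk_right_injective 0)).indepFun hjj')
      (fun j => (hlaw (0, j)).integral_eq) (fun j => (hlaw (0, j)).variance_eq)
  simpa [hmean] using strong_law_ae_real W (integrable_sumSqDev fun j => hY (0, j)) hindep hident

end RowStatistics

lemma tendsto_natCast_div_natCast_mul_sub {a : ℝ} (ha : a ≠ 0) (b : ℝ) :
    Tendsto (fun n : ℕ => (n : ℝ) / (n * a - b)) atTop (𝓝 a⁻¹) := by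
  have hlim : Tendsto (fun n : ℕ => a - b / n) atTop (𝓝 a) := by
    simpa using tendsto_const_nhds.sub (tendsto_const_div_atTop_nhds_zero_nat b)
  refine (hlim.inv₀ ha).congr' ((eventually_ne_atTop 0).mono fun n hn => ?_)
  field_simp

theorem neyman_scott_reference_consistent_general
    {Ω : Type*} [MeasureSpace Ω] [IsProbabilityMeasure (ℙ : Measure Ω)]
    (k : ℕ) (hk : 2 ≤ k) (θ : ℕ → ℝ) (σ2 : NNReal)
    (X : ℕ → Fin k → Ω → ℝ)
    (hmeas : ∀ i j, Measurable (X i j))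
    (hindep : iIndepFun
      (fun (p : ℕ × Fin k) ω => X p.1 p.2 ω) ℙ)
    (hdist : ∀ i j, Measure.map (X i j) ℙ = gaussianReal (θ i) σ2) :
    -- shape of the marginal posterior of σ² under the reference prior
    (∀ n : ℕ, 0 < n → ∃ c : ℝ, 0 < c ∧
      ∀ (x : Fin n → Fin k → ℝ) (v : ℝ), 0 < v →
        (∫ t : Fin n → ℝ, ∏ i, ∏ j,
            (2 * π * v) ^ (-(1 / 2 : ℝ)) * Real.exp (-(x i j - t i) ^ 2 / (2 * v)))
          * v ^ (-(1 : ℝ))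
        = c * v ^ (-((n : ℝ) * (k - 1) / 2) - 1) *
            Real.exp (-(∑ i, ∑ j, (x i j - (∑ j' : Fin k, x i j') / k) ^ 2) / (2 * v))) ∧
    -- the posterior mean n(k-1)S/(n(k-1)-2) is consistent for σ²
    TendstoInMeasure ℙ
      (fun n ω =>
        (∑ i ∈ Finset.range n, ∑ j : Fin k,
            (X i j ω - (∑ j' : Fin k, X i j' ω) / k) ^ 2) / (n * (k - 1) - 2))
      atTop (fun _ => (σ2 : ℝ)) := by
  have : Nonempty (Fin k) := ⟨⟨0, by omega⟩⟩
  have hk1 : (k : ℝ) - 1 ≠ 0 := by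
    have : (2 : ℝ) ≤ k := by exact_mod_cast hk
    linarith
  refine ⟨fun n _ => ⟨((2 * π) ^ (-(((k : ℝ) - 1) / 2)) * (k : ℝ) ^ (-(1 / 2 : ℝ))) ^ n,
    by positivity, fun x v hv => ?_⟩, ?_⟩
  · simpa only [Fintype.card_fin, sumSqDev] using integral_likelihood_mul_reference_prior hv x
  let Y (p : ℕ × Fin k) (ω : Ω) : ℝ := X p.1 p.2 ω - θ p.1
  have hYindep : iIndepFun Y ℙ :=
    hindep.comp (fun p x => x - θ p.1) fun p => measurable_id.sub_const _
  have hYlaw (p : ℕ × Fin k) : HasLaw (Y p) (gaussianReal 0 σ2) ℙ := by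
    simpa using gaussianReal_sub_const ⟨(hmeas p.1 p.2).aemeasurable, hdist p.1 p.2⟩ (θ p.1)
  have hae := ae_tendsto_sum_sumSqDev_div (memLp_id_gaussianReal 2) hYindep hYlaw
  simp only [Y, sumSqDev_sub_const, variance_id_gaussianReal, Fintype.card_fin] at hae
  refine tendstoInMeasure_of_tendsto_ae (fun n => Measurable.aestronglyMeasurable (by fun_prop)) ?_
  filter_upwards [hae] with ω hω
  have hlim := hω.mul (tendsto_natCast_div_natCast_mul_sub hk1 2)
  rw [mul_right_comm, mul_inv_cancel₀ hk1, one_mul] at hlim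
  refine hlim.congr' ((eventually_ne_atTop 0).mono fun n hn => ?_)
  rw [div_mul_div_cancel₀ (Nat.cast_ne_zero.2 hn)]
  simp only [sumSqDev, Fintype.card_fin]

/-- **The reference prior resolves the Neyman–Scott problem.**
In the Neyman–Scott model `X i j ~ N(θ i, σ²)`, `i < n`, `j < k`, with the
reference prior `π_R(θ₁,…,θ_n, σ²) ∝ (σ²)^{-1}`, the marginal posterior of
`v = σ²` (integrating the likelihood times the prior over `(θ₁,…,θ_n) ∈ ℝⁿ`) is
proportional to `v^{-n(k-1)/2-1} exp(-n(k-1)S/(2v))` with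
`n(k-1)S = ∑ᵢ∑ⱼ(x i j - x̄ i)²`; its mean `n(k-1)S/(n(k-1)-2)` converges in
probability to `σ²`, i.e., the posterior mean is consistent. -/
theorem neyman_scott_reference_consistent
    {Ω : Type*} [MeasureSpace Ω] [IsProbabilityMeasure (ℙ : Measure Ω)]
    (k : ℕ) (hk : 2 ≤ k) (θ : ℕ → ℝ) (σ2 : NNReal) (hσ2 : 0 < σ2)
    (X : ℕ → Fin k → Ω → ℝ)
    (hmeas : ∀ i j, Measurable (X i j))
    (hindep : iIndepFun
      (fun (p : ℕ × Fin k) ω => X p.1 p.2 ω) ℙ)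
    (hdist : ∀ i j, Measure.map (X i j) ℙ = gaussianReal (θ i) σ2) :
    -- shape of the marginal posterior of σ² under the reference prior
    (∀ n : ℕ, 0 < n → ∃ c : ℝ, 0 < c ∧
      ∀ (x : Fin n → Fin k → ℝ) (v : ℝ), 0 < v →
        (∫ t : Fin n → ℝ, ∏ i, ∏ j,
            (2 * π * v) ^ (-(1 / 2 : ℝ)) * Real.exp (-(x i j - t i) ^ 2 / (2 * v)))
          * v ^ (-(1 : ℝ))
        = c * v ^ (-((n : ℝ) * (k - 1) / 2) - 1) *
            Real.exp (-(∑ i, ∑ j, (x i j - (∑ j' : Fin k, x i j') / k) ^ 2) / (2 * v))) ∧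
    -- the posterior mean n(k-1)S/(n(k-1)-2) is consistent for σ²
    TendstoInMeasure ℙ
      (fun n ω =>
        (∑ i ∈ Finset.range n, ∑ j : Fin k,
            (X i j ω - (∑ j' : Fin k, X i j' ω) / k) ^ 2) / (n * (k - 1) - 2))
      atTop (fun _ => (σ2 : ℝ)) :=
  neyman_scott_reference_consistent_general k hk θ σ2 X hmeas hindep hdist
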